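/- arXiv:2002.01634 — 2 statements merged into one kernel-verified Lean document; each statement's English description precedes it below -/
import Mathlib

section
/- The subspace g2 = {a ∈ so(7) : ε_{ijk} a_{jk} = 0} is closed under the matrix commutator, i.e. it is a Lie subalgebra of so(7). -/
open Matrix

/-- Kronecker delta on `Fin 7`. -/
def dl (i j : Fin 7) : ℝ := if i = j then 1 else 0

/-- The fully antisymmetric 3-tensor equal to `1` on the triple `(a,b,c)`
(a 3×3 determinant of Kronecker deltas). -/
def t3 (i j k a b c : Fin 7) : ℝ :=
  dl i a * (dl j b * dl k c - dl j c * dl k b)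
  - dl i b * (dl j a * dl k c - dl j c * dl k a)
  + dl i c * (dl j a * dl k b - dl j b * dl k a)

/-- The epsilon symbol of the standard G₂ 3-form
`φ = e^{123}+e^{145}+e^{167}+e^{246}-e^{257}-e^{347}-e^{356}` on ℝ⁷
(indices written 0-based). -/
def eps3 (i j k : Fin 7) : ℝ :=
  t3 i j k 0 1 2 + t3 i j k 0 3 4 + t3 i j k 0 5 6 + t3 i j k 1 3 5
  - t3 i j k 1 4 6 - t3 i j k 2 3 6 - t3 i j k 2 4 5


/-- Membership in `g₂ ⊂ so(7)`: antisymmetry together with the condition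
`ε_{ijk} a_{jk} = 0`. -/
def inG2 (a : Matrix (Fin 7) (Fin 7) ℝ) : Prop :=
  aᵀ = -a ∧ ∀ i, (∑ j : Fin 7, ∑ k : Fin 7, eps3 i j k * a j k) = 0

lemma sumEps0 (c : Matrix (Fin 7) (Fin 7) ℝ) :
    (∑ j : Fin 7, ∑ k : Fin 7, eps3 0 j k * c j k) = c 1 2 - c 2 1 + c 3 4 - c 4 3 + c 5 6 - c 6 5 := by
  simp [Fin.sum_univ_seven, eps3, t3, dl]
  ring

lemma sumEps1 (c : Matrix (Fin 7) (Fin 7) ℝ) :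
    (∑ j : Fin 7, ∑ k : Fin 7, eps3 1 j k * c j k) = -c 0 2 + c 2 0 + c 3 5 - c 4 6 - c 5 3 + c 6 4 := by
  simp [Fin.sum_univ_seven, eps3, t3, dl]
  ring

lemma sumEps2 (c : Matrix (Fin 7) (Fin 7) ℝ) :
    (∑ j : Fin 7, ∑ k : Fin 7, eps3 2 j k * c j k) = c 0 1 - c 1 0 - c 3 6 - c 4 5 + c 5 4 + c 6 3 := by
  simp [Fin.sum_univ_seven, eps3, t3, dl]
  ring

lemma sumEps3 (c : Matrix (Fin 7) (Fin 7) ℝ) :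
    (∑ j : Fin 7, ∑ k : Fin 7, eps3 3 j k * c j k) = -c 0 4 - c 1 5 + c 2 6 + c 4 0 + c 5 1 - c 6 2 := by
  simp [Fin.sum_univ_seven, eps3, t3, dl]
  ring

lemma sumEps4 (c : Matrix (Fin 7) (Fin 7) ℝ) :
    (∑ j : Fin 7, ∑ k : Fin 7, eps3 4 j k * c j k) = c 0 3 + c 1 6 + c 2 5 - c 3 0 - c 5 2 - c 6 1 := by
  simp [Fin.sum_univ_seven, eps3, t3, dl]
  ring

lemma sumEps5 (c : Matrix (Fin 7) (Fin 7) ℝ) :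
    (∑ j : Fin 7, ∑ k : Fin 7, eps3 5 j k * c j k) = -c 0 6 + c 1 3 - c 2 4 - c 3 1 + c 4 2 + c 6 0 := by
  simp [Fin.sum_univ_seven, eps3, t3, dl]
  ring

lemma sumEps6 (c : Matrix (Fin 7) (Fin 7) ℝ) :
    (∑ j : Fin 7, ∑ k : Fin 7, eps3 6 j k * c j k) = c 0 5 - c 1 4 - c 2 3 + c 3 2 + c 4 1 - c 5 0 := by
  simp [Fin.sum_univ_seven, eps3, t3, dl]
  ring

set_option maxHeartbeats 1600000 in
/-- `g₂` is closed under the matrix commutator, i.e. it is a Lie subalgebra of `so(7)`. -/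
theorem g2_closed_under_bracket (a b : Matrix (Fin 7) (Fin 7) ℝ)
    (ha : inG2 a) (hb : inG2 b) : inG2 (a * b - b * a) := by
  obtain ⟨ha1, ha2⟩ := ha
  obtain ⟨hb1, hb2⟩ := hb
  have haa : ∀ j k : Fin 7, a k j = -(a j k) := by
    intro j k; have := congrFun (congrFun ha1 j) k
    simpa [Matrix.transpose_apply] using this
  have hbb : ∀ j k : Fin 7, b k j = -(b j k) := by
    intro j k; have := congrFun (congrFun hb1 j) k
    simpa [Matrix.transpose_apply] using this
  have pa0 : a 1 2 - a 2 1 + a 3 4 - a 4 3 + a 5 6 - a 6 5 = 0 := by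
    rw [← sumEps0 a]; exact ha2 0
  have pa1 : -a 0 2 + a 2 0 + a 3 5 - a 4 6 - a 5 3 + a 6 4 = 0 := by
    rw [← sumEps1 a]; exact ha2 1
  have pa2 : a 0 1 - a 1 0 - a 3 6 - a 4 5 + a 5 4 + a 6 3 = 0 := by
    rw [← sumEps2 a]; exact ha2 2
  have pa3 : -a 0 4 - a 1 5 + a 2 6 + a 4 0 + a 5 1 - a 6 2 = 0 := by
    rw [← sumEps3 a]; exact ha2 3
  have pa4 : a 0 3 + a 1 6 + a 2 5 - a 3 0 - a 5 2 - a 6 1 = 0 := by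
    rw [← sumEps4 a]; exact ha2 4
  have pa5 : -a 0 6 + a 1 3 - a 2 4 - a 3 1 + a 4 2 + a 6 0 = 0 := by
    rw [← sumEps5 a]; exact ha2 5
  have pa6 : a 0 5 - a 1 4 - a 2 3 + a 3 2 + a 4 1 - a 5 0 = 0 := by
    rw [← sumEps6 a]; exact ha2 6
  have pb0 : b 1 2 - b 2 1 + b 3 4 - b 4 3 + b 5 6 - b 6 5 = 0 := by
    rw [← sumEps0 b]; exact hb2 0
  have pb1 : -b 0 2 + b 2 0 + b 3 5 - b 4 6 - b 5 3 + b 6 4 = 0 := by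
    rw [← sumEps1 b]; exact hb2 1
  have pb2 : b 0 1 - b 1 0 - b 3 6 - b 4 5 + b 5 4 + b 6 3 = 0 := by
    rw [← sumEps2 b]; exact hb2 2
  have pb3 : -b 0 4 - b 1 5 + b 2 6 + b 4 0 + b 5 1 - b 6 2 = 0 := by
    rw [← sumEps3 b]; exact hb2 3
  have pb4 : b 0 3 + b 1 6 + b 2 5 - b 3 0 - b 5 2 - b 6 1 = 0 := by
    rw [← sumEps4 b]; exact hb2 4
  have pb5 : -b 0 6 + b 1 3 - b 2 4 - b 3 1 + b 4 2 + b 6 0 = 0 := by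
    rw [← sumEps5 b]; exact hb2 5
  have pb6 : b 0 5 - b 1 4 - b 2 3 + b 3 2 + b 4 1 - b 5 0 = 0 := by
    rw [← sumEps6 b]; exact hb2 6
  constructor
  · rw [Matrix.transpose_sub, Matrix.transpose_mul, Matrix.transpose_mul, ha1, hb1]
    noncomm_ring
  · intro i
    fin_cases i
    · show (∑ j : Fin 7, ∑ k : Fin 7, eps3 0 j k * (a * b - b * a) j k) = 0
      rw [sumEps0]
      simp only [Matrix.sub_apply, Matrix.mul_apply, Fin.sum_univ_seven]
      linear_combination (-1/2 : ℝ) * (b 0 1 - b 1 0 - b 3 6 - b 4 5 + b 5 4 + b 6 3) * (pa1) +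
        (1/2 : ℝ) * (b 3 6 + b 6 3) * (pa1) +
        (1/2 : ℝ) * (b 4 5 + b 5 4) * (pa1) +
        (-1 : ℝ) * b 3 6 * (pa1) +
        (-1 : ℝ) * b 4 5 * (pa1) +
        (1/2 : ℝ) * (-b 0 2 + b 2 0 + b 3 5 - b 4 6 - b 5 3 + b 6 4) * (pa2) +
        (1/2 : ℝ) * (b 3 5 + b 5 3) * (pa2) +
        (-1/2 : ℝ) * (b 4 6 + b 6 4) * (pa2) +
        (-1 : ℝ) * b 3 5 * (pa2) +
        (1 : ℝ) * b 4 6 * (pa2) +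
        (-1/2 : ℝ) * (b 0 3 + b 1 6 + b 2 5 - b 3 0 - b 5 2 - b 6 1) * (pa3) +
        (-1/2 : ℝ) * (b 1 6 + b 6 1) * (pa3) +
        (-1/2 : ℝ) * (b 2 5 + b 5 2) * (pa3) +
        (1 : ℝ) * b 1 6 * (pa3) +
        (1 : ℝ) * b 2 5 * (pa3) +
        (1/2 : ℝ) * (-b 0 4 - b 1 5 + b 2 6 + b 4 0 + b 5 1 - b 6 2) * (pa4) +
        (-1/2 : ℝ) * (b 1 5 + b 5 1) * (pa4) +
        (1/2 : ℝ) * (b 2 6 + b 6 2) * (pa4) +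
        (1 : ℝ) * b 1 5 * (pa4) +
        (-1 : ℝ) * b 2 6 * (pa4) +
        (-1/2 : ℝ) * (b 0 5 - b 1 4 - b 2 3 + b 3 2 + b 4 1 - b 5 0) * (pa5) +
        (1/2 : ℝ) * (b 1 4 + b 4 1) * (pa5) +
        (1/2 : ℝ) * (b 2 3 + b 3 2) * (pa5) +
        (-1 : ℝ) * b 1 4 * (pa5) +
        (-1 : ℝ) * b 2 3 * (pa5) +
        (1/2 : ℝ) * (-b 0 6 + b 1 3 - b 2 4 - b 3 1 + b 4 2 + b 6 0) * (pa6) +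
        (1/2 : ℝ) * (b 1 3 + b 3 1) * (pa6) +
        (-1/2 : ℝ) * (b 2 4 + b 4 2) * (pa6) +
        (-1 : ℝ) * b 1 3 * (pa6) +
        (1 : ℝ) * b 2 4 * (pa6) +
        (-1/2 : ℝ) * (a 3 6 + a 6 3) * (pb1) +
        (-1/2 : ℝ) * (a 4 5 + a 5 4) * (pb1) +
        (1 : ℝ) * a 3 6 * (pb1) +
        (1 : ℝ) * a 4 5 * (pb1) +
        (-1/2 : ℝ) * (a 3 5 + a 5 3) * (pb2) +
        (1/2 : ℝ) * (a 4 6 + a 6 4) * (pb2) +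
        (1 : ℝ) * a 3 5 * (pb2) +
        (-1 : ℝ) * a 4 6 * (pb2) +
        (1/2 : ℝ) * (a 1 6 + a 6 1) * (pb3) +
        (1/2 : ℝ) * (a 2 5 + a 5 2) * (pb3) +
        (-1 : ℝ) * a 1 6 * (pb3) +
        (-1 : ℝ) * a 2 5 * (pb3) +
        (1/2 : ℝ) * (a 1 5 + a 5 1) * (pb4) +
        (-1/2 : ℝ) * (a 2 6 + a 6 2) * (pb4) +
        (-1 : ℝ) * a 1 5 * (pb4) +
        (1 : ℝ) * a 2 6 * (pb4) +
        (-1/2 : ℝ) * (a 1 4 + a 4 1) * (pb5) +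
        (-1/2 : ℝ) * (a 2 3 + a 3 2) * (pb5) +
        (1 : ℝ) * a 1 4 * (pb5) +
        (1 : ℝ) * a 2 3 * (pb5) +
        (-1/2 : ℝ) * (a 1 3 + a 3 1) * (pb6) +
        (1/2 : ℝ) * (a 2 4 + a 4 2) * (pb6) +
        (1 : ℝ) * a 1 3 * (pb6) +
        (-1 : ℝ) * a 2 4 * (pb6) +
        (1/2 : ℝ) * (b 0 2 + b 2 0) * (haa 0 1) +
        (-1/2 : ℝ) * (b 0 1 + b 1 0) * (haa 0 2) +
        (1/2 : ℝ) * (b 0 4 + b 4 0) * (haa 0 3) +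
        (-1/2 : ℝ) * (b 0 3 + b 3 0) * (haa 0 4) +
        (1/2 : ℝ) * (b 0 6 + b 6 0) * (haa 0 5) +
        (-1/2 : ℝ) * (b 0 5 + b 5 0) * (haa 0 6) +
        (1/2 : ℝ) * (b 1 2 + b 2 1) * (haa 1 1) +
        (-1/2 : ℝ) * (b 1 1 + b 1 1) * (haa 1 2) +
        (1/2 : ℝ) * (b 2 2 + b 2 2) * (haa 1 2) +
        (1/2 : ℝ) * (b 1 4 + b 4 1) * (haa 1 3) +
        (1/2 : ℝ) * (b 2 3 + b 3 2) * (haa 1 3) +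
        (-1/2 : ℝ) * (b 1 3 + b 3 1) * (haa 1 4) +
        (1/2 : ℝ) * (b 2 4 + b 4 2) * (haa 1 4) +
        (1/2 : ℝ) * (b 1 6 + b 6 1) * (haa 1 5) +
        (1/2 : ℝ) * (b 2 5 + b 5 2) * (haa 1 5) +
        (-1/2 : ℝ) * (b 1 5 + b 5 1) * (haa 1 6) +
        (1/2 : ℝ) * (b 2 6 + b 6 2) * (haa 1 6) +
        (-1/2 : ℝ) * (b 1 2 + b 2 1) * (haa 2 2) +
        (-1/2 : ℝ) * (b 1 3 + b 3 1) * (haa 2 3) +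
        (1/2 : ℝ) * (b 2 4 + b 4 2) * (haa 2 3) +
        (-1/2 : ℝ) * (b 1 4 + b 4 1) * (haa 2 4) +
        (-1/2 : ℝ) * (b 2 3 + b 3 2) * (haa 2 4) +
        (-1/2 : ℝ) * (b 1 5 + b 5 1) * (haa 2 5) +
        (1/2 : ℝ) * (b 2 6 + b 6 2) * (haa 2 5) +
        (-1/2 : ℝ) * (b 1 6 + b 6 1) * (haa 2 6) +
        (-1/2 : ℝ) * (b 2 5 + b 5 2) * (haa 2 6) +
        (1/2 : ℝ) * (b 3 4 + b 4 3) * (haa 3 3) +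
        (-1/2 : ℝ) * (b 3 3 + b 3 3) * (haa 3 4) +
        (1/2 : ℝ) * (b 4 4 + b 4 4) * (haa 3 4) +
        (1/2 : ℝ) * (b 3 6 + b 6 3) * (haa 3 5) +
        (1/2 : ℝ) * (b 4 5 + b 5 4) * (haa 3 5) +
        (-1/2 : ℝ) * (b 3 5 + b 5 3) * (haa 3 6) +
        (1/2 : ℝ) * (b 4 6 + b 6 4) * (haa 3 6) +
        (-1/2 : ℝ) * (b 3 4 + b 4 3) * (haa 4 4) +
        (-1/2 : ℝ) * (b 3 5 + b 5 3) * (haa 4 5) +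
        (1/2 : ℝ) * (b 4 6 + b 6 4) * (haa 4 5) +
        (-1/2 : ℝ) * (b 3 6 + b 6 3) * (haa 4 6) +
        (-1/2 : ℝ) * (b 4 5 + b 5 4) * (haa 4 6) +
        (1/2 : ℝ) * (b 5 6 + b 6 5) * (haa 5 5) +
        (-1/2 : ℝ) * (b 5 5 + b 5 5) * (haa 5 6) +
        (1/2 : ℝ) * (b 6 6 + b 6 6) * (haa 5 6) +
        (-1/2 : ℝ) * (b 5 6 + b 6 5) * (haa 6 6)
    · show (∑ j : Fin 7, ∑ k : Fin 7, eps3 1 j k * (a * b - b * a) j k) = 0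
      rw [sumEps1]
      simp only [Matrix.sub_apply, Matrix.mul_apply, Fin.sum_univ_seven]
      linear_combination (1/2 : ℝ) * (b 0 1 - b 1 0 - b 3 6 - b 4 5 + b 5 4 + b 6 3) * (pa0) +
        (-1/2 : ℝ) * (b 3 6 + b 6 3) * (pa0) +
        (-1/2 : ℝ) * (b 4 5 + b 5 4) * (pa0) +
        (1 : ℝ) * b 3 6 * (pa0) +
        (1 : ℝ) * b 4 5 * (pa0) +
        (-1/2 : ℝ) * (b 1 2 - b 2 1 + b 3 4 - b 4 3 + b 5 6 - b 6 5) * (pa2) +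
        (-1/2 : ℝ) * (b 3 4 + b 4 3) * (pa2) +
        (-1/2 : ℝ) * (b 5 6 + b 6 5) * (pa2) +
        (1 : ℝ) * b 3 4 * (pa2) +
        (1 : ℝ) * b 5 6 * (pa2) +
        (1/2 : ℝ) * (-b 0 6 + b 1 3 - b 2 4 - b 3 1 + b 4 2 + b 6 0) * (pa3) +
        (1/2 : ℝ) * (b 1 3 + b 3 1) * (pa3) +
        (-1 : ℝ) * b 1 3 * (pa3) +
        (-1/2 : ℝ) * (b 0 5 - b 1 4 - b 2 3 + b 3 2 + b 4 1 - b 5 0) * (pa4) +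
        (1/2 : ℝ) * (b 1 4 + b 4 1) * (pa4) +
        (-1 : ℝ) * b 1 4 * (pa4) +
        (-1/2 : ℝ) * (-b 0 4 - b 1 5 + b 2 6 + b 4 0 + b 5 1 - b 6 2) * (pa5) +
        (1/2 : ℝ) * (b 1 5 + b 5 1) * (pa5) +
        (-1 : ℝ) * b 1 5 * (pa5) +
        (1/2 : ℝ) * (b 0 3 + b 1 6 + b 2 5 - b 3 0 - b 5 2 - b 6 1) * (pa6) +
        (1/2 : ℝ) * (b 1 6 + b 6 1) * (pa6) +
        (-1 : ℝ) * b 1 6 * (pa6) +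
        (1/2 : ℝ) * (a 3 6 + a 6 3) * (pb0) +
        (1/2 : ℝ) * (a 4 5 + a 5 4) * (pb0) +
        (-1 : ℝ) * a 3 6 * (pb0) +
        (-1 : ℝ) * a 4 5 * (pb0) +
        (1/2 : ℝ) * (a 3 4 + a 4 3) * (pb2) +
        (1/2 : ℝ) * (a 5 6 + a 6 5) * (pb2) +
        (-1 : ℝ) * a 3 4 * (pb2) +
        (-1 : ℝ) * a 5 6 * (pb2) +
        (-1/2 : ℝ) * (a 1 3 + a 3 1) * (pb3) +
        (1 : ℝ) * a 1 3 * (pb3) +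
        (-1/2 : ℝ) * (a 1 4 + a 4 1) * (pb4) +
        (1 : ℝ) * a 1 4 * (pb4) +
        (-1/2 : ℝ) * (a 1 5 + a 5 1) * (pb5) +
        (1 : ℝ) * a 1 5 * (pb5) +
        (-1/2 : ℝ) * (a 1 6 + a 6 1) * (pb6) +
        (1 : ℝ) * a 1 6 * (pb6) +
        (-1/2 : ℝ) * (b 0 2 + b 2 0) * (haa 0 0) +
        (-1/2 : ℝ) * (b 1 2 + b 2 1) * (haa 0 1) +
        (1/2 : ℝ) * (b 0 0 + b 0 0) * (haa 0 2) +
        (-1/2 : ℝ) * (b 2 2 + b 2 2) * (haa 0 2) +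
        (1/2 : ℝ) * (b 0 5 + b 5 0) * (haa 0 3) +
        (-1/2 : ℝ) * (b 2 3 + b 3 2) * (haa 0 3) +
        (-1/2 : ℝ) * (b 0 6 + b 6 0) * (haa 0 4) +
        (-1/2 : ℝ) * (b 2 4 + b 4 2) * (haa 0 4) +
        (-1/2 : ℝ) * (b 0 3 + b 3 0) * (haa 0 5) +
        (-1/2 : ℝ) * (b 2 5 + b 5 2) * (haa 0 5) +
        (1/2 : ℝ) * (b 0 4 + b 4 0) * (haa 0 6) +
        (-1/2 : ℝ) * (b 2 6 + b 6 2) * (haa 0 6) +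
        (1/2 : ℝ) * (b 0 1 + b 1 0) * (haa 1 2) +
        (1/2 : ℝ) * (b 1 5 + b 5 1) * (haa 1 3) +
        (-1/2 : ℝ) * (b 1 6 + b 6 1) * (haa 1 4) +
        (-1/2 : ℝ) * (b 1 3 + b 3 1) * (haa 1 5) +
        (1/2 : ℝ) * (b 1 4 + b 4 1) * (haa 1 6) +
        (1/2 : ℝ) * (b 0 2 + b 2 0) * (haa 2 2) +
        (1/2 : ℝ) * (b 0 3 + b 3 0) * (haa 2 3) +
        (1/2 : ℝ) * (b 2 5 + b 5 2) * (haa 2 3) +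
        (1/2 : ℝ) * (b 0 4 + b 4 0) * (haa 2 4) +
        (-1/2 : ℝ) * (b 2 6 + b 6 2) * (haa 2 4) +
        (1/2 : ℝ) * (b 0 5 + b 5 0) * (haa 2 5) +
        (-1/2 : ℝ) * (b 2 3 + b 3 2) * (haa 2 5) +
        (1/2 : ℝ) * (b 0 6 + b 6 0) * (haa 2 6) +
        (1/2 : ℝ) * (b 2 4 + b 4 2) * (haa 2 6) +
        (1/2 : ℝ) * (b 3 5 + b 5 3) * (haa 3 3) +
        (-1/2 : ℝ) * (b 3 6 + b 6 3) * (haa 3 4) +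
        (1/2 : ℝ) * (b 4 5 + b 5 4) * (haa 3 4) +
        (-1/2 : ℝ) * (b 3 3 + b 3 3) * (haa 3 5) +
        (1/2 : ℝ) * (b 5 5 + b 5 5) * (haa 3 5) +
        (1/2 : ℝ) * (b 3 4 + b 4 3) * (haa 3 6) +
        (1/2 : ℝ) * (b 5 6 + b 6 5) * (haa 3 6) +
        (-1/2 : ℝ) * (b 4 6 + b 6 4) * (haa 4 4) +
        (-1/2 : ℝ) * (b 3 4 + b 4 3) * (haa 4 5) +
        (-1/2 : ℝ) * (b 5 6 + b 6 5) * (haa 4 5) +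
        (1/2 : ℝ) * (b 4 4 + b 4 4) * (haa 4 6) +
        (-1/2 : ℝ) * (b 6 6 + b 6 6) * (haa 4 6) +
        (-1/2 : ℝ) * (b 3 5 + b 5 3) * (haa 5 5) +
        (-1/2 : ℝ) * (b 3 6 + b 6 3) * (haa 5 6) +
        (1/2 : ℝ) * (b 4 5 + b 5 4) * (haa 5 6) +
        (1/2 : ℝ) * (b 4 6 + b 6 4) * (haa 6 6)
    · show (∑ j : Fin 7, ∑ k : Fin 7, eps3 2 j k * (a * b - b * a) j k) = 0
      rw [sumEps2]
      simp only [Matrix.sub_apply, Matrix.mul_apply, Fin.sum_univ_seven]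
      linear_combination (-1/2 : ℝ) * (-b 0 2 + b 2 0 + b 3 5 - b 4 6 - b 5 3 + b 6 4) * (pa0) +
        (-1/2 : ℝ) * (b 3 5 + b 5 3) * (pa0) +
        (1/2 : ℝ) * (b 4 6 + b 6 4) * (pa0) +
        (1 : ℝ) * b 3 5 * (pa0) +
        (-1 : ℝ) * b 4 6 * (pa0) +
        (1/2 : ℝ) * (b 1 2 - b 2 1 + b 3 4 - b 4 3 + b 5 6 - b 6 5) * (pa1) +
        (1/2 : ℝ) * (b 3 4 + b 4 3) * (pa1) +
        (1/2 : ℝ) * (b 5 6 + b 6 5) * (pa1) +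
        (-1 : ℝ) * b 3 4 * (pa1) +
        (-1 : ℝ) * b 5 6 * (pa1) +
        (-1/2 : ℝ) * (b 0 5 - b 1 4 - b 2 3 + b 3 2 + b 4 1 - b 5 0) * (pa3) +
        (1/2 : ℝ) * (b 2 3 + b 3 2) * (pa3) +
        (-1 : ℝ) * b 2 3 * (pa3) +
        (-1/2 : ℝ) * (-b 0 6 + b 1 3 - b 2 4 - b 3 1 + b 4 2 + b 6 0) * (pa4) +
        (1/2 : ℝ) * (b 2 4 + b 4 2) * (pa4) +
        (-1 : ℝ) * b 2 4 * (pa4) +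
        (1/2 : ℝ) * (b 0 3 + b 1 6 + b 2 5 - b 3 0 - b 5 2 - b 6 1) * (pa5) +
        (1/2 : ℝ) * (b 2 5 + b 5 2) * (pa5) +
        (-1 : ℝ) * b 2 5 * (pa5) +
        (1/2 : ℝ) * (-b 0 4 - b 1 5 + b 2 6 + b 4 0 + b 5 1 - b 6 2) * (pa6) +
        (1/2 : ℝ) * (b 2 6 + b 6 2) * (pa6) +
        (-1 : ℝ) * b 2 6 * (pa6) +
        (1/2 : ℝ) * (a 3 5 + a 5 3) * (pb0) +
        (-1/2 : ℝ) * (a 4 6 + a 6 4) * (pb0) +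
        (-1 : ℝ) * a 3 5 * (pb0) +
        (1 : ℝ) * a 4 6 * (pb0) +
        (-1/2 : ℝ) * (a 3 4 + a 4 3) * (pb1) +
        (-1/2 : ℝ) * (a 5 6 + a 6 5) * (pb1) +
        (1 : ℝ) * a 3 4 * (pb1) +
        (1 : ℝ) * a 5 6 * (pb1) +
        (-1/2 : ℝ) * (a 2 3 + a 3 2) * (pb3) +
        (1 : ℝ) * a 2 3 * (pb3) +
        (-1/2 : ℝ) * (a 2 4 + a 4 2) * (pb4) +
        (1 : ℝ) * a 2 4 * (pb4) +
        (-1/2 : ℝ) * (a 2 5 + a 5 2) * (pb5) +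
        (1 : ℝ) * a 2 5 * (pb5) +
        (-1/2 : ℝ) * (a 2 6 + a 6 2) * (pb6) +
        (1 : ℝ) * a 2 6 * (pb6) +
        (1/2 : ℝ) * (b 0 1 + b 1 0) * (haa 0 0) +
        (-1/2 : ℝ) * (b 0 0 + b 0 0) * (haa 0 1) +
        (1/2 : ℝ) * (b 1 1 + b 1 1) * (haa 0 1) +
        (1/2 : ℝ) * (b 1 2 + b 2 1) * (haa 0 2) +
        (-1/2 : ℝ) * (b 0 6 + b 6 0) * (haa 0 3) +
        (1/2 : ℝ) * (b 1 3 + b 3 1) * (haa 0 3) +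
        (-1/2 : ℝ) * (b 0 5 + b 5 0) * (haa 0 4) +
        (1/2 : ℝ) * (b 1 4 + b 4 1) * (haa 0 4) +
        (1/2 : ℝ) * (b 0 4 + b 4 0) * (haa 0 5) +
        (1/2 : ℝ) * (b 1 5 + b 5 1) * (haa 0 5) +
        (1/2 : ℝ) * (b 0 3 + b 3 0) * (haa 0 6) +
        (1/2 : ℝ) * (b 1 6 + b 6 1) * (haa 0 6) +
        (-1/2 : ℝ) * (b 0 1 + b 1 0) * (haa 1 1) +
        (-1/2 : ℝ) * (b 0 2 + b 2 0) * (haa 1 2) +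
        (-1/2 : ℝ) * (b 0 3 + b 3 0) * (haa 1 3) +
        (-1/2 : ℝ) * (b 1 6 + b 6 1) * (haa 1 3) +
        (-1/2 : ℝ) * (b 0 4 + b 4 0) * (haa 1 4) +
        (-1/2 : ℝ) * (b 1 5 + b 5 1) * (haa 1 4) +
        (-1/2 : ℝ) * (b 0 5 + b 5 0) * (haa 1 5) +
        (1/2 : ℝ) * (b 1 4 + b 4 1) * (haa 1 5) +
        (-1/2 : ℝ) * (b 0 6 + b 6 0) * (haa 1 6) +
        (1/2 : ℝ) * (b 1 3 + b 3 1) * (haa 1 6) +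
        (-1/2 : ℝ) * (b 2 6 + b 6 2) * (haa 2 3) +
        (-1/2 : ℝ) * (b 2 5 + b 5 2) * (haa 2 4) +
        (1/2 : ℝ) * (b 2 4 + b 4 2) * (haa 2 5) +
        (1/2 : ℝ) * (b 2 3 + b 3 2) * (haa 2 6) +
        (-1/2 : ℝ) * (b 3 6 + b 6 3) * (haa 3 3) +
        (-1/2 : ℝ) * (b 3 5 + b 5 3) * (haa 3 4) +
        (-1/2 : ℝ) * (b 4 6 + b 6 4) * (haa 3 4) +
        (1/2 : ℝ) * (b 3 4 + b 4 3) * (haa 3 5) +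
        (-1/2 : ℝ) * (b 5 6 + b 6 5) * (haa 3 5) +
        (1/2 : ℝ) * (b 3 3 + b 3 3) * (haa 3 6) +
        (-1/2 : ℝ) * (b 6 6 + b 6 6) * (haa 3 6) +
        (-1/2 : ℝ) * (b 4 5 + b 5 4) * (haa 4 4) +
        (1/2 : ℝ) * (b 4 4 + b 4 4) * (haa 4 5) +
        (-1/2 : ℝ) * (b 5 5 + b 5 5) * (haa 4 5) +
        (1/2 : ℝ) * (b 3 4 + b 4 3) * (haa 4 6) +
        (-1/2 : ℝ) * (b 5 6 + b 6 5) * (haa 4 6) +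
        (1/2 : ℝ) * (b 4 5 + b 5 4) * (haa 5 5) +
        (1/2 : ℝ) * (b 3 5 + b 5 3) * (haa 5 6) +
        (1/2 : ℝ) * (b 4 6 + b 6 4) * (haa 5 6) +
        (1/2 : ℝ) * (b 3 6 + b 6 3) * (haa 6 6)
    · show (∑ j : Fin 7, ∑ k : Fin 7, eps3 3 j k * (a * b - b * a) j k) = 0
      rw [sumEps3]
      simp only [Matrix.sub_apply, Matrix.mul_apply, Fin.sum_univ_seven]
      linear_combination (1/2 : ℝ) * (b 1 6 + b 6 1) * (pa0) +
        (1/2 : ℝ) * (b 2 5 + b 5 2) * (pa0) +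
        (-1 : ℝ) * b 1 6 * (pa0) +
        (-1 : ℝ) * b 2 5 * (pa0) +
        (-1/2 : ℝ) * (-b 0 6 + b 1 3 - b 2 4 - b 3 1 + b 4 2 + b 6 0) * (pa1) +
        (-1/2 : ℝ) * (b 1 3 + b 3 1) * (pa1) +
        (1 : ℝ) * b 1 3 * (pa1) +
        (1/2 : ℝ) * (b 0 5 - b 1 4 - b 2 3 + b 3 2 + b 4 1 - b 5 0) * (pa2) +
        (-1/2 : ℝ) * (b 2 3 + b 3 2) * (pa2) +
        (1 : ℝ) * b 2 3 * (pa2) +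
        (1/2 : ℝ) * (b 3 4 + b 4 3) * (pa4) +
        (-1 : ℝ) * b 3 4 * (pa4) +
        (1/2 : ℝ) * (-b 0 2 + b 2 0 + b 3 5 - b 4 6 - b 5 3 + b 6 4) * (pa5) +
        (1/2 : ℝ) * (b 3 5 + b 5 3) * (pa5) +
        (-1 : ℝ) * b 3 5 * (pa5) +
        (-1/2 : ℝ) * (b 0 1 - b 1 0 - b 3 6 - b 4 5 + b 5 4 + b 6 3) * (pa6) +
        (1/2 : ℝ) * (b 3 6 + b 6 3) * (pa6) +
        (-1 : ℝ) * b 3 6 * (pa6) +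
        (-1/2 : ℝ) * (a 1 6 + a 6 1) * (pb0) +
        (-1/2 : ℝ) * (a 2 5 + a 5 2) * (pb0) +
        (1 : ℝ) * a 1 6 * (pb0) +
        (1 : ℝ) * a 2 5 * (pb0) +
        (1/2 : ℝ) * (a 1 3 + a 3 1) * (pb1) +
        (-1 : ℝ) * a 1 3 * (pb1) +
        (1/2 : ℝ) * (a 2 3 + a 3 2) * (pb2) +
        (-1 : ℝ) * a 2 3 * (pb2) +
        (-1/2 : ℝ) * (a 3 4 + a 4 3) * (pb4) +
        (1 : ℝ) * a 3 4 * (pb4) +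
        (-1/2 : ℝ) * (a 3 5 + a 5 3) * (pb5) +
        (1 : ℝ) * a 3 5 * (pb5) +
        (-1/2 : ℝ) * (a 3 6 + a 6 3) * (pb6) +
        (1 : ℝ) * a 3 6 * (pb6) +
        (-1/2 : ℝ) * (b 0 4 + b 4 0) * (haa 0 0) +
        (-1/2 : ℝ) * (b 0 5 + b 5 0) * (haa 0 1) +
        (-1/2 : ℝ) * (b 1 4 + b 4 1) * (haa 0 1) +
        (1/2 : ℝ) * (b 0 6 + b 6 0) * (haa 0 2) +
        (-1/2 : ℝ) * (b 2 4 + b 4 2) * (haa 0 2) +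
        (-1/2 : ℝ) * (b 3 4 + b 4 3) * (haa 0 3) +
        (1/2 : ℝ) * (b 0 0 + b 0 0) * (haa 0 4) +
        (-1/2 : ℝ) * (b 4 4 + b 4 4) * (haa 0 4) +
        (1/2 : ℝ) * (b 0 1 + b 1 0) * (haa 0 5) +
        (-1/2 : ℝ) * (b 4 5 + b 5 4) * (haa 0 5) +
        (-1/2 : ℝ) * (b 0 2 + b 2 0) * (haa 0 6) +
        (-1/2 : ℝ) * (b 4 6 + b 6 4) * (haa 0 6) +
        (-1/2 : ℝ) * (b 1 5 + b 5 1) * (haa 1 1) +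
        (1/2 : ℝ) * (b 1 6 + b 6 1) * (haa 1 2) +
        (-1/2 : ℝ) * (b 2 5 + b 5 2) * (haa 1 2) +
        (-1/2 : ℝ) * (b 3 5 + b 5 3) * (haa 1 3) +
        (1/2 : ℝ) * (b 0 1 + b 1 0) * (haa 1 4) +
        (-1/2 : ℝ) * (b 4 5 + b 5 4) * (haa 1 4) +
        (1/2 : ℝ) * (b 1 1 + b 1 1) * (haa 1 5) +
        (-1/2 : ℝ) * (b 5 5 + b 5 5) * (haa 1 5) +
        (-1/2 : ℝ) * (b 1 2 + b 2 1) * (haa 1 6) +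
        (-1/2 : ℝ) * (b 5 6 + b 6 5) * (haa 1 6) +
        (1/2 : ℝ) * (b 2 6 + b 6 2) * (haa 2 2) +
        (1/2 : ℝ) * (b 3 6 + b 6 3) * (haa 2 3) +
        (1/2 : ℝ) * (b 0 2 + b 2 0) * (haa 2 4) +
        (1/2 : ℝ) * (b 4 6 + b 6 4) * (haa 2 4) +
        (1/2 : ℝ) * (b 1 2 + b 2 1) * (haa 2 5) +
        (1/2 : ℝ) * (b 5 6 + b 6 5) * (haa 2 5) +
        (-1/2 : ℝ) * (b 2 2 + b 2 2) * (haa 2 6) +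
        (1/2 : ℝ) * (b 6 6 + b 6 6) * (haa 2 6) +
        (1/2 : ℝ) * (b 0 3 + b 3 0) * (haa 3 4) +
        (1/2 : ℝ) * (b 1 3 + b 3 1) * (haa 3 5) +
        (-1/2 : ℝ) * (b 2 3 + b 3 2) * (haa 3 6) +
        (1/2 : ℝ) * (b 0 4 + b 4 0) * (haa 4 4) +
        (1/2 : ℝ) * (b 0 5 + b 5 0) * (haa 4 5) +
        (1/2 : ℝ) * (b 1 4 + b 4 1) * (haa 4 5) +
        (1/2 : ℝ) * (b 0 6 + b 6 0) * (haa 4 6) +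
        (-1/2 : ℝ) * (b 2 4 + b 4 2) * (haa 4 6) +
        (1/2 : ℝ) * (b 1 5 + b 5 1) * (haa 5 5) +
        (1/2 : ℝ) * (b 1 6 + b 6 1) * (haa 5 6) +
        (-1/2 : ℝ) * (b 2 5 + b 5 2) * (haa 5 6) +
        (-1/2 : ℝ) * (b 2 6 + b 6 2) * (haa 6 6)
    · show (∑ j : Fin 7, ∑ k : Fin 7, eps3 4 j k * (a * b - b * a) j k) = 0
      rw [sumEps4]
      simp only [Matrix.sub_apply, Matrix.mul_apply, Fin.sum_univ_seven]
      linear_combination (1/2 : ℝ) * (b 1 5 + b 5 1) * (pa0) +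
        (-1/2 : ℝ) * (b 2 6 + b 6 2) * (pa0) +
        (-1 : ℝ) * b 1 5 * (pa0) +
        (1 : ℝ) * b 2 6 * (pa0) +
        (1/2 : ℝ) * (b 0 5 - b 1 4 - b 2 3 + b 3 2 + b 4 1 - b 5 0) * (pa1) +
        (-1/2 : ℝ) * (b 1 4 + b 4 1) * (pa1) +
        (1 : ℝ) * b 1 4 * (pa1) +
        (1/2 : ℝ) * (-b 0 6 + b 1 3 - b 2 4 - b 3 1 + b 4 2 + b 6 0) * (pa2) +
        (-1/2 : ℝ) * (b 2 4 + b 4 2) * (pa2) +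
        (1 : ℝ) * b 2 4 * (pa2) +
        (-1/2 : ℝ) * (b 3 4 + b 4 3) * (pa3) +
        (1 : ℝ) * b 3 4 * (pa3) +
        (-1/2 : ℝ) * (b 0 1 - b 1 0 - b 3 6 - b 4 5 + b 5 4 + b 6 3) * (pa5) +
        (1/2 : ℝ) * (b 4 5 + b 5 4) * (pa5) +
        (-1 : ℝ) * b 4 5 * (pa5) +
        (-1/2 : ℝ) * (-b 0 2 + b 2 0 + b 3 5 - b 4 6 - b 5 3 + b 6 4) * (pa6) +
        (1/2 : ℝ) * (b 4 6 + b 6 4) * (pa6) +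
        (-1 : ℝ) * b 4 6 * (pa6) +
        (-1/2 : ℝ) * (a 1 5 + a 5 1) * (pb0) +
        (1/2 : ℝ) * (a 2 6 + a 6 2) * (pb0) +
        (1 : ℝ) * a 1 5 * (pb0) +
        (-1 : ℝ) * a 2 6 * (pb0) +
        (1/2 : ℝ) * (a 1 4 + a 4 1) * (pb1) +
        (-1 : ℝ) * a 1 4 * (pb1) +
        (1/2 : ℝ) * (a 2 4 + a 4 2) * (pb2) +
        (-1 : ℝ) * a 2 4 * (pb2) +
        (1/2 : ℝ) * (a 3 4 + a 4 3) * (pb3) +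
        (-1 : ℝ) * a 3 4 * (pb3) +
        (-1/2 : ℝ) * (a 4 5 + a 5 4) * (pb5) +
        (1 : ℝ) * a 4 5 * (pb5) +
        (-1/2 : ℝ) * (a 4 6 + a 6 4) * (pb6) +
        (1 : ℝ) * a 4 6 * (pb6) +
        (1/2 : ℝ) * (b 0 3 + b 3 0) * (haa 0 0) +
        (1/2 : ℝ) * (b 0 6 + b 6 0) * (haa 0 1) +
        (1/2 : ℝ) * (b 1 3 + b 3 1) * (haa 0 1) +
        (1/2 : ℝ) * (b 0 5 + b 5 0) * (haa 0 2) +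
        (1/2 : ℝ) * (b 2 3 + b 3 2) * (haa 0 2) +
        (-1/2 : ℝ) * (b 0 0 + b 0 0) * (haa 0 3) +
        (1/2 : ℝ) * (b 3 3 + b 3 3) * (haa 0 3) +
        (1/2 : ℝ) * (b 3 4 + b 4 3) * (haa 0 4) +
        (-1/2 : ℝ) * (b 0 2 + b 2 0) * (haa 0 5) +
        (1/2 : ℝ) * (b 3 5 + b 5 3) * (haa 0 5) +
        (-1/2 : ℝ) * (b 0 1 + b 1 0) * (haa 0 6) +
        (1/2 : ℝ) * (b 3 6 + b 6 3) * (haa 0 6) +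
        (1/2 : ℝ) * (b 1 6 + b 6 1) * (haa 1 1) +
        (1/2 : ℝ) * (b 1 5 + b 5 1) * (haa 1 2) +
        (1/2 : ℝ) * (b 2 6 + b 6 2) * (haa 1 2) +
        (-1/2 : ℝ) * (b 0 1 + b 1 0) * (haa 1 3) +
        (1/2 : ℝ) * (b 3 6 + b 6 3) * (haa 1 3) +
        (1/2 : ℝ) * (b 4 6 + b 6 4) * (haa 1 4) +
        (-1/2 : ℝ) * (b 1 2 + b 2 1) * (haa 1 5) +
        (1/2 : ℝ) * (b 5 6 + b 6 5) * (haa 1 5) +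
        (-1/2 : ℝ) * (b 1 1 + b 1 1) * (haa 1 6) +
        (1/2 : ℝ) * (b 6 6 + b 6 6) * (haa 1 6) +
        (1/2 : ℝ) * (b 2 5 + b 5 2) * (haa 2 2) +
        (-1/2 : ℝ) * (b 0 2 + b 2 0) * (haa 2 3) +
        (1/2 : ℝ) * (b 3 5 + b 5 3) * (haa 2 3) +
        (1/2 : ℝ) * (b 4 5 + b 5 4) * (haa 2 4) +
        (-1/2 : ℝ) * (b 2 2 + b 2 2) * (haa 2 5) +
        (1/2 : ℝ) * (b 5 5 + b 5 5) * (haa 2 5) +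
        (-1/2 : ℝ) * (b 1 2 + b 2 1) * (haa 2 6) +
        (1/2 : ℝ) * (b 5 6 + b 6 5) * (haa 2 6) +
        (-1/2 : ℝ) * (b 0 3 + b 3 0) * (haa 3 3) +
        (-1/2 : ℝ) * (b 0 4 + b 4 0) * (haa 3 4) +
        (-1/2 : ℝ) * (b 0 5 + b 5 0) * (haa 3 5) +
        (-1/2 : ℝ) * (b 2 3 + b 3 2) * (haa 3 5) +
        (-1/2 : ℝ) * (b 0 6 + b 6 0) * (haa 3 6) +
        (-1/2 : ℝ) * (b 1 3 + b 3 1) * (haa 3 6) +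
        (-1/2 : ℝ) * (b 2 4 + b 4 2) * (haa 4 5) +
        (-1/2 : ℝ) * (b 1 4 + b 4 1) * (haa 4 6) +
        (-1/2 : ℝ) * (b 2 5 + b 5 2) * (haa 5 5) +
        (-1/2 : ℝ) * (b 1 5 + b 5 1) * (haa 5 6) +
        (-1/2 : ℝ) * (b 2 6 + b 6 2) * (haa 5 6) +
        (-1/2 : ℝ) * (b 1 6 + b 6 1) * (haa 6 6)
    · show (∑ j : Fin 7, ∑ k : Fin 7, eps3 5 j k * (a * b - b * a) j k) = 0
      rw [sumEps5]
      simp only [Matrix.sub_apply, Matrix.mul_apply, Fin.sum_univ_seven]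
      linear_combination (-1/2 : ℝ) * (b 1 4 + b 4 1) * (pa0) +
        (-1/2 : ℝ) * (b 2 3 + b 3 2) * (pa0) +
        (1 : ℝ) * b 1 4 * (pa0) +
        (1 : ℝ) * b 2 3 * (pa0) +
        (1/2 : ℝ) * (-b 0 4 - b 1 5 + b 2 6 + b 4 0 + b 5 1 - b 6 2) * (pa1) +
        (-1/2 : ℝ) * (b 1 5 + b 5 1) * (pa1) +
        (1 : ℝ) * b 1 5 * (pa1) +
        (-1/2 : ℝ) * (b 0 3 + b 1 6 + b 2 5 - b 3 0 - b 5 2 - b 6 1) * (pa2) +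
        (-1/2 : ℝ) * (b 2 5 + b 5 2) * (pa2) +
        (1 : ℝ) * b 2 5 * (pa2) +
        (-1/2 : ℝ) * (-b 0 2 + b 2 0 + b 3 5 - b 4 6 - b 5 3 + b 6 4) * (pa3) +
        (-1/2 : ℝ) * (b 3 5 + b 5 3) * (pa3) +
        (1 : ℝ) * b 3 5 * (pa3) +
        (1/2 : ℝ) * (b 0 1 - b 1 0 - b 3 6 - b 4 5 + b 5 4 + b 6 3) * (pa4) +
        (-1/2 : ℝ) * (b 4 5 + b 5 4) * (pa4) +
        (1 : ℝ) * b 4 5 * (pa4) +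
        (1/2 : ℝ) * (b 5 6 + b 6 5) * (pa6) +
        (-1 : ℝ) * b 5 6 * (pa6) +
        (1/2 : ℝ) * (a 1 4 + a 4 1) * (pb0) +
        (1/2 : ℝ) * (a 2 3 + a 3 2) * (pb0) +
        (-1 : ℝ) * a 1 4 * (pb0) +
        (-1 : ℝ) * a 2 3 * (pb0) +
        (1/2 : ℝ) * (a 1 5 + a 5 1) * (pb1) +
        (-1 : ℝ) * a 1 5 * (pb1) +
        (1/2 : ℝ) * (a 2 5 + a 5 2) * (pb2) +
        (-1 : ℝ) * a 2 5 * (pb2) +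
        (1/2 : ℝ) * (a 3 5 + a 5 3) * (pb3) +
        (-1 : ℝ) * a 3 5 * (pb3) +
        (1/2 : ℝ) * (a 4 5 + a 5 4) * (pb4) +
        (-1 : ℝ) * a 4 5 * (pb4) +
        (-1/2 : ℝ) * (a 5 6 + a 6 5) * (pb6) +
        (1 : ℝ) * a 5 6 * (pb6) +
        (-1/2 : ℝ) * (b 0 6 + b 6 0) * (haa 0 0) +
        (1/2 : ℝ) * (b 0 3 + b 3 0) * (haa 0 1) +
        (-1/2 : ℝ) * (b 1 6 + b 6 1) * (haa 0 1) +
        (-1/2 : ℝ) * (b 0 4 + b 4 0) * (haa 0 2) +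
        (-1/2 : ℝ) * (b 2 6 + b 6 2) * (haa 0 2) +
        (-1/2 : ℝ) * (b 0 1 + b 1 0) * (haa 0 3) +
        (-1/2 : ℝ) * (b 3 6 + b 6 3) * (haa 0 3) +
        (1/2 : ℝ) * (b 0 2 + b 2 0) * (haa 0 4) +
        (-1/2 : ℝ) * (b 4 6 + b 6 4) * (haa 0 4) +
        (-1/2 : ℝ) * (b 5 6 + b 6 5) * (haa 0 5) +
        (1/2 : ℝ) * (b 0 0 + b 0 0) * (haa 0 6) +
        (-1/2 : ℝ) * (b 6 6 + b 6 6) * (haa 0 6) +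
        (1/2 : ℝ) * (b 1 3 + b 3 1) * (haa 1 1) +
        (-1/2 : ℝ) * (b 1 4 + b 4 1) * (haa 1 2) +
        (1/2 : ℝ) * (b 2 3 + b 3 2) * (haa 1 2) +
        (-1/2 : ℝ) * (b 1 1 + b 1 1) * (haa 1 3) +
        (1/2 : ℝ) * (b 3 3 + b 3 3) * (haa 1 3) +
        (1/2 : ℝ) * (b 1 2 + b 2 1) * (haa 1 4) +
        (1/2 : ℝ) * (b 3 4 + b 4 3) * (haa 1 4) +
        (1/2 : ℝ) * (b 3 5 + b 5 3) * (haa 1 5) +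
        (1/2 : ℝ) * (b 0 1 + b 1 0) * (haa 1 6) +
        (1/2 : ℝ) * (b 3 6 + b 6 3) * (haa 1 6) +
        (-1/2 : ℝ) * (b 2 4 + b 4 2) * (haa 2 2) +
        (-1/2 : ℝ) * (b 1 2 + b 2 1) * (haa 2 3) +
        (-1/2 : ℝ) * (b 3 4 + b 4 3) * (haa 2 3) +
        (1/2 : ℝ) * (b 2 2 + b 2 2) * (haa 2 4) +
        (-1/2 : ℝ) * (b 4 4 + b 4 4) * (haa 2 4) +
        (-1/2 : ℝ) * (b 4 5 + b 5 4) * (haa 2 5) +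
        (1/2 : ℝ) * (b 0 2 + b 2 0) * (haa 2 6) +
        (-1/2 : ℝ) * (b 4 6 + b 6 4) * (haa 2 6) +
        (-1/2 : ℝ) * (b 1 3 + b 3 1) * (haa 3 3) +
        (-1/2 : ℝ) * (b 1 4 + b 4 1) * (haa 3 4) +
        (1/2 : ℝ) * (b 2 3 + b 3 2) * (haa 3 4) +
        (-1/2 : ℝ) * (b 1 5 + b 5 1) * (haa 3 5) +
        (1/2 : ℝ) * (b 0 3 + b 3 0) * (haa 3 6) +
        (-1/2 : ℝ) * (b 1 6 + b 6 1) * (haa 3 6) +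
        (1/2 : ℝ) * (b 2 4 + b 4 2) * (haa 4 4) +
        (1/2 : ℝ) * (b 2 5 + b 5 2) * (haa 4 5) +
        (1/2 : ℝ) * (b 0 4 + b 4 0) * (haa 4 6) +
        (1/2 : ℝ) * (b 2 6 + b 6 2) * (haa 4 6) +
        (1/2 : ℝ) * (b 0 5 + b 5 0) * (haa 5 6) +
        (1/2 : ℝ) * (b 0 6 + b 6 0) * (haa 6 6)
    · show (∑ j : Fin 7, ∑ k : Fin 7, eps3 6 j k * (a * b - b * a) j k) = 0
      rw [sumEps6]
      simp only [Matrix.sub_apply, Matrix.mul_apply, Fin.sum_univ_seven]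
      linear_combination (-1/2 : ℝ) * (b 1 3 + b 3 1) * (pa0) +
        (1/2 : ℝ) * (b 2 4 + b 4 2) * (pa0) +
        (1 : ℝ) * b 1 3 * (pa0) +
        (-1 : ℝ) * b 2 4 * (pa0) +
        (-1/2 : ℝ) * (b 0 3 + b 1 6 + b 2 5 - b 3 0 - b 5 2 - b 6 1) * (pa1) +
        (-1/2 : ℝ) * (b 1 6 + b 6 1) * (pa1) +
        (1 : ℝ) * b 1 6 * (pa1) +
        (-1/2 : ℝ) * (-b 0 4 - b 1 5 + b 2 6 + b 4 0 + b 5 1 - b 6 2) * (pa2) +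
        (-1/2 : ℝ) * (b 2 6 + b 6 2) * (pa2) +
        (1 : ℝ) * b 2 6 * (pa2) +
        (1/2 : ℝ) * (b 0 1 - b 1 0 - b 3 6 - b 4 5 + b 5 4 + b 6 3) * (pa3) +
        (-1/2 : ℝ) * (b 3 6 + b 6 3) * (pa3) +
        (1 : ℝ) * b 3 6 * (pa3) +
        (1/2 : ℝ) * (-b 0 2 + b 2 0 + b 3 5 - b 4 6 - b 5 3 + b 6 4) * (pa4) +
        (-1/2 : ℝ) * (b 4 6 + b 6 4) * (pa4) +
        (1 : ℝ) * b 4 6 * (pa4) +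
        (-1/2 : ℝ) * (b 5 6 + b 6 5) * (pa5) +
        (1 : ℝ) * b 5 6 * (pa5) +
        (1/2 : ℝ) * (a 1 3 + a 3 1) * (pb0) +
        (-1/2 : ℝ) * (a 2 4 + a 4 2) * (pb0) +
        (-1 : ℝ) * a 1 3 * (pb0) +
        (1 : ℝ) * a 2 4 * (pb0) +
        (1/2 : ℝ) * (a 1 6 + a 6 1) * (pb1) +
        (-1 : ℝ) * a 1 6 * (pb1) +
        (1/2 : ℝ) * (a 2 6 + a 6 2) * (pb2) +
        (-1 : ℝ) * a 2 6 * (pb2) +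
        (1/2 : ℝ) * (a 3 6 + a 6 3) * (pb3) +
        (-1 : ℝ) * a 3 6 * (pb3) +
        (1/2 : ℝ) * (a 4 6 + a 6 4) * (pb4) +
        (-1 : ℝ) * a 4 6 * (pb4) +
        (1/2 : ℝ) * (a 5 6 + a 6 5) * (pb5) +
        (-1 : ℝ) * a 5 6 * (pb5) +
        (1/2 : ℝ) * (b 0 5 + b 5 0) * (haa 0 0) +
        (-1/2 : ℝ) * (b 0 4 + b 4 0) * (haa 0 1) +
        (1/2 : ℝ) * (b 1 5 + b 5 1) * (haa 0 1) +
        (-1/2 : ℝ) * (b 0 3 + b 3 0) * (haa 0 2) +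
        (1/2 : ℝ) * (b 2 5 + b 5 2) * (haa 0 2) +
        (1/2 : ℝ) * (b 0 2 + b 2 0) * (haa 0 3) +
        (1/2 : ℝ) * (b 3 5 + b 5 3) * (haa 0 3) +
        (1/2 : ℝ) * (b 0 1 + b 1 0) * (haa 0 4) +
        (1/2 : ℝ) * (b 4 5 + b 5 4) * (haa 0 4) +
        (-1/2 : ℝ) * (b 0 0 + b 0 0) * (haa 0 5) +
        (1/2 : ℝ) * (b 5 5 + b 5 5) * (haa 0 5) +
        (1/2 : ℝ) * (b 5 6 + b 6 5) * (haa 0 6) +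
        (-1/2 : ℝ) * (b 1 4 + b 4 1) * (haa 1 1) +
        (-1/2 : ℝ) * (b 1 3 + b 3 1) * (haa 1 2) +
        (-1/2 : ℝ) * (b 2 4 + b 4 2) * (haa 1 2) +
        (1/2 : ℝ) * (b 1 2 + b 2 1) * (haa 1 3) +
        (-1/2 : ℝ) * (b 3 4 + b 4 3) * (haa 1 3) +
        (1/2 : ℝ) * (b 1 1 + b 1 1) * (haa 1 4) +
        (-1/2 : ℝ) * (b 4 4 + b 4 4) * (haa 1 4) +
        (-1/2 : ℝ) * (b 0 1 + b 1 0) * (haa 1 5) +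
        (-1/2 : ℝ) * (b 4 5 + b 5 4) * (haa 1 5) +
        (-1/2 : ℝ) * (b 4 6 + b 6 4) * (haa 1 6) +
        (-1/2 : ℝ) * (b 2 3 + b 3 2) * (haa 2 2) +
        (1/2 : ℝ) * (b 2 2 + b 2 2) * (haa 2 3) +
        (-1/2 : ℝ) * (b 3 3 + b 3 3) * (haa 2 3) +
        (1/2 : ℝ) * (b 1 2 + b 2 1) * (haa 2 4) +
        (-1/2 : ℝ) * (b 3 4 + b 4 3) * (haa 2 4) +
        (-1/2 : ℝ) * (b 0 2 + b 2 0) * (haa 2 5) +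
        (-1/2 : ℝ) * (b 3 5 + b 5 3) * (haa 2 5) +
        (-1/2 : ℝ) * (b 3 6 + b 6 3) * (haa 2 6) +
        (1/2 : ℝ) * (b 2 3 + b 3 2) * (haa 3 3) +
        (1/2 : ℝ) * (b 1 3 + b 3 1) * (haa 3 4) +
        (1/2 : ℝ) * (b 2 4 + b 4 2) * (haa 3 4) +
        (-1/2 : ℝ) * (b 0 3 + b 3 0) * (haa 3 5) +
        (1/2 : ℝ) * (b 2 5 + b 5 2) * (haa 3 5) +
        (1/2 : ℝ) * (b 2 6 + b 6 2) * (haa 3 6) +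
        (1/2 : ℝ) * (b 1 4 + b 4 1) * (haa 4 4) +
        (-1/2 : ℝ) * (b 0 4 + b 4 0) * (haa 4 5) +
        (1/2 : ℝ) * (b 1 5 + b 5 1) * (haa 4 5) +
        (1/2 : ℝ) * (b 1 6 + b 6 1) * (haa 4 6) +
        (-1/2 : ℝ) * (b 0 5 + b 5 0) * (haa 5 5) +
        (-1/2 : ℝ) * (b 0 6 + b 6 0) * (haa 5 6)
end

section
/- For any antisymmetric 7×7 matrix T with ε_{ijk}T_{jk} = 0 (T ∈ g2), the tensor S_{ijkl} defined by the conformally flat formula S = 3T_{ij}T_{kl} + (3/16)(2ε_{pij}ε_{qkl} − 3ε_{pik}ε_{qjl} + 3ε_{pil}ε_{qjk})T_{pm}T_{mq} + (9/16)(δ_{ik}T_{jm}T_{ml} − δ_{il}T_{jm}T_{mk} − δ_{jk}T_{im}T_{ml} + δ_{jl}T_{im}T_{mk}) + (1/16)(4ε_{ijkl} + δ_{ik}δ_{jl} − δ_{il}δ_{jk})T_{pq}T_{pq} satisfies the symmetry S_{ijkl} = S_{klij} and the antisymmetry S_{ijkl} = −S_{jikl}. -/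
open Matrix

/-- The fully antisymmetric 4-tensor equal to `1` on the quadruple `(a,b,c,d)`
(a 4×4 determinant of Kronecker deltas). -/
def t4 (i j k l a b c d : Fin 7) : ℝ :=
  dl i a * t3 j k l b c d - dl i b * t3 j k l a c d
  + dl i c * t3 j k l a b d - dl i d * t3 j k l a b c

/-- The epsilon symbol of the 4-form
`∗φ = e^{4567}+e^{2367}+e^{2345}+e^{1357}-e^{1346}-e^{1256}-e^{1247}` on ℝ⁷
(indices written 0-based). -/
def eps4 (i j k l : Fin 7) : ℝ :=
  t4 i j k l 3 4 5 6 + t4 i j k l 1 2 5 6 + t4 i j k l 1 2 3 4 + t4 i j k l 0 2 4 6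
  - t4 i j k l 0 2 3 5 - t4 i j k l 0 1 4 5 - t4 i j k l 0 1 3 6

/-- The S-tensor of the conformally flat ansatz (equation (4.1c) of the paper),
a quadratic expression in `T ∈ g₂`. -/
noncomputable def Sconf (T : Matrix (Fin 7) (Fin 7) ℝ) (i j k l : Fin 7) : ℝ :=
  3 * T i j * T k l
  + (3/16) * ∑ p : Fin 7, ∑ q : Fin 7,
      (2 * eps3 p i j * eps3 q k l - 3 * eps3 p i k * eps3 q j l
        + 3 * eps3 p i l * eps3 q j k) * (∑ m : Fin 7, T p m * T m q)
  + (9/16) * (dl i k * (∑ m : Fin 7, T j m * T m l)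
      - dl i l * (∑ m : Fin 7, T j m * T m k)
      - dl j k * (∑ m : Fin 7, T i m * T m l)
      + dl j l * (∑ m : Fin 7, T i m * T m k))
  + (1/16) * (4 * eps4 i j k l + dl i k * dl j l - dl i l * dl j k) *
      (∑ p : Fin 7, ∑ q : Fin 7, T p q * T p q)

/-- For `T ∈ g₂`, the conformally flat S-tensor has the pair-exchange symmetry
`S_{ijkl} = S_{klij}` and the antisymmetry `S_{ijkl} = −S_{jikl}`. -/
theorem Sconf_symmetries (T : Matrix (Fin 7) (Fin 7) ℝ) (h1 : Tᵀ = -T)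
    (h2 : ∀ i, (∑ j : Fin 7, ∑ k : Fin 7, eps3 i j k * T j k) = 0) :
    ∀ i j k l, Sconf T i j k l = Sconf T k l i j ∧ Sconf T i j k l = -Sconf T j i k l := by
  clear h2
  have hT : ∀ a b : Fin 7, T b a = -T a b := by
    intro a b
    have h := congrFun (congrFun h1 a) b
    simpa using h
  have hQ : ∀ p q : Fin 7, (∑ m : Fin 7, T p m * T m q) = ∑ m : Fin 7, T q m * T m p := by
    intro p q
    refine Finset.sum_congr rfl fun m _ => ?_
    rw [hT m q, hT p m]; ring
  have e3swap : ∀ p a b : Fin 7, eps3 p b a = -eps3 p a b := by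
    intro p a b; simp only [eps3, t3]; ring
  have e4swap : ∀ i j k l : Fin 7, eps4 j i k l = -eps4 i j k l := by
    intro i j k l; simp only [eps4, t4, t3]; ring
  have e4pair : ∀ i j k l : Fin 7, eps4 k l i j = eps4 i j k l := by
    intro i j k l; simp only [eps4, t4, t3]; ring
  have dls : ∀ a b : Fin 7, dl b a = dl a b := by
    intro a b; unfold dl
    rcases eq_or_ne a b with h | h
    · simp [h]
    · simp [h, Ne.symm h]
  have anti : ∀ F : Fin 7 → Fin 7 → ℝ, (∀ p q, F p q + F q p = 0) →
      (∑ p : Fin 7, ∑ q : Fin 7, F p q * (∑ m : Fin 7, T p m * T m q)) = 0 := by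
    intro F hF
    have h2' : (∑ p : Fin 7, ∑ q : Fin 7, F p q * (∑ m : Fin 7, T p m * T m q))
        = -(∑ p : Fin 7, ∑ q : Fin 7, F p q * (∑ m : Fin 7, T p m * T m q)) := by
      conv_lhs => rw [Finset.sum_comm]
      rw [← Finset.sum_neg_distrib]
      refine Finset.sum_congr rfl fun a _ => ?_
      rw [← Finset.sum_neg_distrib]
      refine Finset.sum_congr rfl fun b _ => ?_
      rw [hQ b a, show F b a = -F a b from by linarith [hF a b]]
      ring
    linarith [h2']
  have key : ∀ i j k l : Fin 7,
      (∑ p : Fin 7, ∑ q : Fin 7,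
        (2 * eps3 p i j * eps3 q k l - 3 * eps3 p i k * eps3 q j l
          + 3 * eps3 p i l * eps3 q j k) * (∑ m : Fin 7, T p m * T m q))
      = ∑ p : Fin 7, ∑ q : Fin 7,
        (2 * eps3 p k l * eps3 q i j - 3 * eps3 p k i * eps3 q l j
          + 3 * eps3 p k j * eps3 q l i) * (∑ m : Fin 7, T p m * T m q) := by
    intro i j k l
    have hD := anti (fun p q =>
      (2 * eps3 p i j * eps3 q k l - 3 * eps3 p i k * eps3 q j l + 3 * eps3 p i l * eps3 q j k)
      - (2 * eps3 p k l * eps3 q i j - 3 * eps3 p k i * eps3 q l j + 3 * eps3 p k j * eps3 q l i))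
      (by
        intro p q
        rw [e3swap p i k, e3swap q j l, e3swap p j k, e3swap q i l,
            e3swap q i k, e3swap p j l, e3swap q j k, e3swap p i l]
        ring)
    simp only [sub_mul, Finset.sum_sub_distrib] at hD
    linarith [hD]
  have key2 : ∀ i j k l : Fin 7,
      (∑ p : Fin 7, ∑ q : Fin 7,
        (2 * eps3 p j i * eps3 q k l - 3 * eps3 p j k * eps3 q i l
          + 3 * eps3 p j l * eps3 q i k) * (∑ m : Fin 7, T p m * T m q))
      = -(∑ p : Fin 7, ∑ q : Fin 7,
        (2 * eps3 p i j * eps3 q k l - 3 * eps3 p i k * eps3 q j l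
          + 3 * eps3 p i l * eps3 q j k) * (∑ m : Fin 7, T p m * T m q)) := by
    intro i j k l
    have hD := anti (fun p q =>
      (2 * eps3 p j i * eps3 q k l - 3 * eps3 p j k * eps3 q i l + 3 * eps3 p j l * eps3 q i k)
      + (2 * eps3 p i j * eps3 q k l - 3 * eps3 p i k * eps3 q j l + 3 * eps3 p i l * eps3 q j k))
      (by
        intro p q
        rw [e3swap p i j, e3swap q i j]
        ring)
    have comb : (∑ p : Fin 7, ∑ q : Fin 7,
        (2 * eps3 p j i * eps3 q k l - 3 * eps3 p j k * eps3 q i l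
          + 3 * eps3 p j l * eps3 q i k) * (∑ m : Fin 7, T p m * T m q))
      + (∑ p : Fin 7, ∑ q : Fin 7,
        (2 * eps3 p i j * eps3 q k l - 3 * eps3 p i k * eps3 q j l
          + 3 * eps3 p i l * eps3 q j k) * (∑ m : Fin 7, T p m * T m q))
      = ∑ p : Fin 7, ∑ q : Fin 7,
        ((2 * eps3 p j i * eps3 q k l - 3 * eps3 p j k * eps3 q i l + 3 * eps3 p j l * eps3 q i k)
          + (2 * eps3 p i j * eps3 q k l - 3 * eps3 p i k * eps3 q j l + 3 * eps3 p i l * eps3 q j k))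
          * (∑ m : Fin 7, T p m * T m q) := by
      rw [← Finset.sum_add_distrib]
      refine Finset.sum_congr rfl fun p _ => ?_
      rw [← Finset.sum_add_distrib]
      refine Finset.sum_congr rfl fun q _ => ?_
      ring
    linarith [hD, comb]
  intro i j k l
  refine ⟨?_, ?_⟩
  · simp only [Sconf]
    rw [key i j k l, e4pair i j k l, dls i k, dls j l, dls j k, dls i l,
        hQ l j, hQ l i, hQ k j, hQ k i]
    ring
  · simp only [Sconf]
    rw [key2 i j k l, hT i j, e4swap i j k l]
    ring
end
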